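/- arXiv:2309.04877 — 6 statements merged into one kernel-verified Lean document; each statement's English description precedes it below -/
import Mathlib

section
/- Let f : ℝ^d → ℝ be a convex function with a minimizer x*. Fix T ∈ ℕ with T ≥ 1 and constants G, R > 0. Consider the subgradient iteration x_{k+1} = x_k − η g_k with constant step size η = R/(G√T), where for each k, g_k is a subgradient of f at x_k with ‖g_k‖ ≤ G, and suppose ‖x_1 − x*‖ ≤ R. Then f((1/T)·∑_{k=1}^T x_k) − f(x*) ≤ RG/√T. -/
open RealInnerProductSpace

theorem subgradient_method_optimal_step
    {d : ℕ} (f : EuclideanSpace ℝ (Fin d) → ℝ)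
    (hf : ConvexOn ℝ Set.univ f)
    (xstar : EuclideanSpace ℝ (Fin d)) (hmin : ∀ y, f xstar ≤ f y)
    (T : ℕ) (hT : 1 ≤ T) (G R : ℝ) (hG : 0 < G) (hR : 0 < R)
    (x g : ℕ → EuclideanSpace ℝ (Fin d))
    (hsub : ∀ k y, f y ≥ f (x k) + ⟪g k, y - x k⟫)
    (hgb : ∀ k, ‖g k‖ ≤ G)
    (hupd : ∀ k, x (k + 1) = x k - (R / (G * Real.sqrt T)) • g k)
    (hinit : ‖x 1 - xstar‖ ≤ R) :
    f ((1 / (T : ℝ)) • ∑ k ∈ Finset.Icc 1 T, x k) - f xstar ≤ R * G / Real.sqrt T := by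
  have hT' : (0:ℝ) < T := by exact_mod_cast hT
  have hs : (0:ℝ) < Real.sqrt T := Real.sqrt_pos.mpr hT'
  set η : ℝ := R / (G * Real.sqrt T) with hηdef
  have hη : 0 < η := by positivity
  -- per-step inequality
  have hstep : ∀ k, ‖x (k+1) - xstar‖^2 ≤
      ‖x k - xstar‖^2 - 2*η*(f (x k) - f xstar) + η^2*G^2 := by
    intro k
    have hsg : f (x k) - f xstar ≤ ⟪g k, x k - xstar⟫ := by
      have h1 := hsub k xstar
      have h2 : ⟪g k, xstar - x k⟫ = -⟪g k, x k - xstar⟫ := by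
        rw [← inner_neg_right]; congr 1; abel
      rw [h2] at h1; linarith
    have hx : x (k+1) - xstar = (x k - xstar) - η • g k := by
      rw [hupd k]; abel
    rw [hx, norm_sub_sq_real]
    have hi : ⟪x k - xstar, η • g k⟫ = η * ⟪g k, x k - xstar⟫ := by
      rw [real_inner_smul_right, real_inner_comm]
    have hn : ‖η • g k‖^2 ≤ η^2 * G^2 := by
      rw [norm_smul, mul_pow, Real.norm_eq_abs, sq_abs]
      have : ‖g k‖^2 ≤ G^2 := by
        have := hgb k
        nlinarith [norm_nonneg (g k)]
      nlinarith [sq_nonneg η]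
    rw [hi]
    nlinarith
  -- telescoping sum
  have hsum : ∀ n : ℕ, ∑ k ∈ Finset.Icc 1 n, (2*η*(f (x k) - f xstar)) ≤
      ‖x 1 - xstar‖^2 - ‖x (n+1) - xstar‖^2 + n * (η^2*G^2) := by
    intro n
    induction n with
    | zero => simp
    | succ n ih =>
      rw [Finset.sum_Icc_succ_top (by omega : 1 ≤ n + 1)]
      have := hstep (n+1)
      push_cast
      push_cast at ih
      nlinarith
  have hsumT := hsum T
  have hR2 : ‖x 1 - xstar‖^2 ≤ R^2 := by nlinarith [norm_nonneg (x 1 - xstar)]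
  have hnn : (0:ℝ) ≤ ‖x (T+1) - xstar‖^2 := sq_nonneg _
  have hkey : ∑ k ∈ Finset.Icc 1 T, (f (x k) - f xstar) ≤ T * (R * G / Real.sqrt T) := by
    have h1 : 2*η * ∑ k ∈ Finset.Icc 1 T, (f (x k) - f xstar) ≤ R^2 + T * (η^2*G^2) := by
      rw [Finset.mul_sum]
      calc ∑ k ∈ Finset.Icc 1 T, 2*η*(f (x k) - f xstar)
          ≤ ‖x 1 - xstar‖^2 - ‖x (T+1) - xstar‖^2 + T * (η^2*G^2) := hsumT
        _ ≤ R^2 + T * (η^2*G^2) := by linarith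
    have hsq : Real.sqrt T * Real.sqrt T = T := Real.mul_self_sqrt (le_of_lt hT')
    have heq : R^2 + T * (η^2*G^2) = 2*η * (T * (R * G / Real.sqrt T)) := by
      rw [hηdef]
      field_simp
      linear_combination hsq
    rw [heq] at h1
    exact le_of_mul_le_mul_left h1 (by positivity)
  -- Jensen
  have hjen : f ((1 / (T : ℝ)) • ∑ k ∈ Finset.Icc 1 T, x k) ≤
      ∑ k ∈ Finset.Icc 1 T, (1 / (T : ℝ)) * f (x k) := by
    have := hf.map_sum_le (t := Finset.Icc 1 T) (w := fun _ => 1 / (T : ℝ)) (p := x)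
      (fun i _ => by positivity)
      (by
        rw [Finset.sum_const, Nat.card_Icc]
        simp only [Nat.add_sub_cancel, nsmul_eq_mul]
        field_simp)
      (fun i _ => Set.mem_univ _)
    rwa [← Finset.smul_sum] at this
  have hcard : ∑ k ∈ Finset.Icc 1 T, ((1:ℝ) / T) * f xstar = f xstar := by
    rw [← Finset.sum_mul, Finset.sum_const, Nat.card_Icc]
    simp only [Nat.add_sub_cancel, nsmul_eq_mul]
    field_simp
  have hfinal : ∑ k ∈ Finset.Icc 1 T, (1 / (T : ℝ)) * f (x k) - f xstar ≤
      R * G / Real.sqrt T := by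
    rw [← hcard, ← Finset.sum_sub_distrib]
    have : ∑ k ∈ Finset.Icc 1 T, ((1 / (T : ℝ)) * f (x k) - (1 / (T : ℝ)) * f xstar)
        = (1 / (T : ℝ)) * ∑ k ∈ Finset.Icc 1 T, (f (x k) - f xstar) := by
      rw [Finset.mul_sum]; congr 1; ext k; ring
    rw [this]
    calc (1 / (T : ℝ)) * ∑ k ∈ Finset.Icc 1 T, (f (x k) - f xstar)
        ≤ (1 / (T : ℝ)) * (T * (R * G / Real.sqrt T)) := by
          apply mul_le_mul_of_nonneg_left hkey (by positivity)
      _ = R * G / Real.sqrt T := by field_simp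
  linarith
end

section
/- Let f : ℝ^d → ℝ be a convex function with a minimizer x*. Fix T ∈ ℕ with T ≥ 1, a step size η > 0, and constants G, R > 0. Consider the subgradient iteration x_{k+1} = x_k − η g_k, where for each k, g_k is a subgradient of f at x_k with ‖g_k‖ ≤ G, and suppose ‖x_1 − x*‖ ≤ R. Then f((1/T)·∑_{k=1}^T x_k) − f(x*) ≤ R²/(2ηT) + ηG²/2. -/
open RealInnerProductSpace

theorem subgradient_method_general_step
    {d : ℕ} (f : EuclideanSpace ℝ (Fin d) → ℝ)
    (hf : ConvexOn ℝ Set.univ f)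
    (xstar : EuclideanSpace ℝ (Fin d)) (hmin : ∀ y, f xstar ≤ f y)
    (T : ℕ) (hT : 1 ≤ T) (η G R : ℝ) (hη : 0 < η) (hG : 0 < G) (hR : 0 < R)
    (x g : ℕ → EuclideanSpace ℝ (Fin d))
    (hsub : ∀ k y, f y ≥ f (x k) + ⟪g k, y - x k⟫)
    (hgb : ∀ k, ‖g k‖ ≤ G)
    (hupd : ∀ k, x (k + 1) = x k - η • g k)
    (hinit : ‖x 1 - xstar‖ ≤ R) :
    f ((1 / (T : ℝ)) • ∑ k ∈ Finset.Icc 1 T, x k) - f xstar ≤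
      R ^ 2 / (2 * η * T) + η * G ^ 2 / 2 := by
  have hTpos : (0 : ℝ) < T := by exact_mod_cast hT
  set a : ℕ → ℝ := fun k => ‖x k - xstar‖ ^ 2 with ha
  -- per-step inequality
  have step : ∀ k, f (x k) - f xstar ≤ (a k - a (k + 1)) / (2 * η) + η * G ^ 2 / 2 := by
    intro k
    have hexp : a (k + 1) = a k - 2 * η * ⟪g k, x k - xstar⟫ + η ^ 2 * ‖g k‖ ^ 2 := by
      have h1 : x (k + 1) - xstar = (x k - xstar) - η • g k := by
        rw [hupd k]; abel
      simp only [ha, h1]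
      rw [norm_sub_sq_real, real_inner_smul_right, real_inner_comm, norm_smul, mul_pow,
        Real.norm_eq_abs, sq_abs]
      ring
    have hineq : f (x k) - f xstar ≤ ⟪g k, x k - xstar⟫ := by
      have := hsub k xstar
      have h2 : ⟪g k, xstar - x k⟫ = -⟪g k, x k - xstar⟫ := by
        rw [← inner_neg_right]; congr 1; abel
      linarith [this, h2.symm ▸ this]
    have hgk : ‖g k‖ ^ 2 ≤ G ^ 2 := by
      have := hgb k
      nlinarith [norm_nonneg (g k)]
    have : ⟪g k, x k - xstar⟫ = (a k - a (k + 1)) / (2 * η) + η * ‖g k‖ ^ 2 / 2 := by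
      rw [hexp]; field_simp; ring
    rw [this] at hineq
    have : η * ‖g k‖ ^ 2 / 2 ≤ η * G ^ 2 / 2 := by nlinarith
    linarith
  -- telescoping sum
  have tele : ∀ n : ℕ, ∑ k ∈ Finset.Icc 1 n, (a k - a (k + 1)) = a 1 - a (n + 1) := by
    intro n
    induction n with
    | zero => simp
    | succ m ih =>
      rw [Finset.sum_Icc_succ_top (Nat.one_le_iff_ne_zero.mpr (Nat.succ_ne_zero m)), ih]
      ring
  have sum_bound : ∑ k ∈ Finset.Icc 1 T, (f (x k) - f xstar) ≤
      R ^ 2 / (2 * η) + T * (η * G ^ 2 / 2) := by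
    calc ∑ k ∈ Finset.Icc 1 T, (f (x k) - f xstar)
        ≤ ∑ k ∈ Finset.Icc 1 T, ((a k - a (k + 1)) / (2 * η) + η * G ^ 2 / 2) :=
          Finset.sum_le_sum fun k _ => step k
      _ = (a 1 - a (T + 1)) / (2 * η) + T * (η * G ^ 2 / 2) := by
          rw [Finset.sum_add_distrib, ← Finset.sum_div, tele T, Finset.sum_const,
            Nat.card_Icc, Nat.add_sub_cancel, nsmul_eq_mul]
      _ ≤ R ^ 2 / (2 * η) + T * (η * G ^ 2 / 2) := by
          have h1 : a 1 ≤ R ^ 2 := by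
            simp only [ha]
            nlinarith [norm_nonneg (x 1 - xstar), hinit]
          have h2 : 0 ≤ a (T + 1) := sq_nonneg _
          have : a 1 - a (T + 1) ≤ R ^ 2 := by linarith
          gcongr
  -- Jensen
  have jensen : f ((1 / (T : ℝ)) • ∑ k ∈ Finset.Icc 1 T, x k) ≤
      (1 / (T : ℝ)) * ∑ k ∈ Finset.Icc 1 T, f (x k) := by
    have hw : ∀ k ∈ Finset.Icc 1 T, (0 : ℝ) ≤ 1 := fun _ _ => zero_le_one
    have hwsum : (0 : ℝ) < ∑ _k ∈ Finset.Icc 1 T, (1 : ℝ) := by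
      rw [Finset.sum_const, Nat.card_Icc, Nat.add_sub_cancel, nsmul_eq_mul, mul_one]
      exact hTpos
    have := hf.map_centerMass_le hw hwsum (fun k _ => Set.mem_univ (x k))
    rw [Finset.centerMass, Finset.centerMass] at this
    simp only [one_smul, Finset.sum_const, Nat.card_Icc, Nat.add_sub_cancel, nsmul_eq_mul,
      mul_one, smul_eq_mul, Function.comp] at this
    rw [one_div]
    simpa using this
  have hsum_f : (1 / (T : ℝ)) * ∑ k ∈ Finset.Icc 1 T, f (x k) - f xstar =
      (1 / (T : ℝ)) * ∑ k ∈ Finset.Icc 1 T, (f (x k) - f xstar) := by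
    rw [Finset.sum_sub_distrib, Finset.sum_const, Nat.card_Icc, Nat.add_sub_cancel,
      nsmul_eq_mul]
    field_simp
  have : f ((1 / (T : ℝ)) • ∑ k ∈ Finset.Icc 1 T, x k) - f xstar ≤
      (1 / (T : ℝ)) * (R ^ 2 / (2 * η) + T * (η * G ^ 2 / 2)) := by
    have h := jensen
    have h2 : (1 / (T : ℝ)) * ∑ k ∈ Finset.Icc 1 T, (f (x k) - f xstar) ≤
        (1 / (T : ℝ)) * (R ^ 2 / (2 * η) + T * (η * G ^ 2 / 2)) := by
      apply mul_le_mul_of_nonneg_left sum_bound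
      positivity
    linarith [hsum_f ▸ h2, h]
  calc f ((1 / (T : ℝ)) • ∑ k ∈ Finset.Icc 1 T, x k) - f xstar
      ≤ (1 / (T : ℝ)) * (R ^ 2 / (2 * η) + T * (η * G ^ 2 / 2)) := this
    _ = R ^ 2 / (2 * η * T) + η * G ^ 2 / 2 := by field_simp
end

section
/- Let f : ℝ^d → ℝ be a differentiable convex function that is L-smooth for some L > 0, and let x* be a minimizer of f. Consider gradient descent with step size 1/L: x_{k+1} = x_k − (1/L)∇f(x_k). Then for every T ∈ ℕ with T ≥ 1, f(x_{T+1}) − f(x*) ≤ L‖x_1 − x*‖²/(2T). -/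
open RealInnerProductSpace

lemma descent_lemma
    {d : ℕ} (f : EuclideanSpace ℝ (Fin d) → ℝ)
    (f' : EuclideanSpace ℝ (Fin d) → EuclideanSpace ℝ (Fin d))
    (hgrad : ∀ z, HasGradientAt f (f' z) z)
    (L : ℝ) (hL : 0 < L)
    (hsmooth : ∀ z w, ‖f' z - f' w‖ ≤ L * ‖z - w‖)
    (a b : EuclideanSpace ℝ (Fin d)) :
    f b ≤ f a + ⟪f' a, b - a⟫ + L / 2 * ‖b - a‖ ^ 2 := by
  set v := b - a with hv
  have hcontf' : Continuous f' := by
    have : LipschitzWith (Real.toNNReal L) f' := by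
      apply LipschitzWith.of_dist_le_mul
      intro p q
      simpa [dist_eq_norm, Real.coe_toNNReal _ hL.le] using hsmooth p q
    exact this.continuous
  have hpath : ∀ t : ℝ, HasDerivAt (fun s : ℝ => a + s • v) v t := by
    intro t
    simpa using ((hasDerivAt_id t).smul_const v).const_add a
  have hderiv : ∀ t : ℝ, HasDerivAt (fun s : ℝ => f (a + s • v))
      ⟪f' (a + t • v), v⟫ t := by
    intro t
    have h1 := (hgrad (a + t • v)).hasFDerivAt.comp_hasDerivAt t (hpath t)
    have h2 : HasDerivAt (fun s : ℝ => f (a + s • v)) _ t := h1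
    simpa using h2
  have hcont : Continuous fun t : ℝ => ⟪f' (a + t • v), v⟫ := by
    exact (hcontf'.comp (by continuity)).inner continuous_const
  have hftc : ∫ t in (0:ℝ)..1, ⟪f' (a + t • v), v⟫ = f (a + (1:ℝ) • v) - f (a + (0:ℝ) • v) := by
    exact intervalIntegral.integral_eq_sub_of_hasDerivAt (fun t _ => hderiv t)
      (hcont.intervalIntegrable 0 1)
  have hab : f b - f a = ∫ t in (0:ℝ)..1, ⟪f' (a + t • v), v⟫ := by
    rw [hftc]; simp [hv]
  have hbound : ∫ t in (0:ℝ)..1, ⟪f' (a + t • v), v⟫ ≤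
      ∫ t in (0:ℝ)..1, (⟪f' a, v⟫ + L * t * ‖v‖ ^ 2) := by
    apply intervalIntegral.integral_mono_on zero_le_one (hcont.intervalIntegrable 0 1)
      ((by continuity : Continuous fun t : ℝ => ⟪f' a, v⟫ + L * t * ‖v‖ ^ 2).intervalIntegrable 0 1)
    intro t ht
    have h1 : ⟪f' (a + t • v), v⟫ - ⟪f' a, v⟫ = ⟪f' (a + t • v) - f' a, v⟫ := by
      rw [inner_sub_left]
    have h2 : ⟪f' (a + t • v) - f' a, v⟫ ≤ ‖f' (a + t • v) - f' a‖ * ‖v‖ :=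
      real_inner_le_norm _ _
    have h3 : ‖f' (a + t • v) - f' a‖ ≤ L * (t * ‖v‖) := by
      have := hsmooth (a + t • v) a
      simpa [norm_smul, abs_of_nonneg ht.1] using this
    nlinarith [norm_nonneg v, mul_le_mul_of_nonneg_right h3 (norm_nonneg v)]
  have hint : ∫ t in (0:ℝ)..1, (⟪f' a, v⟫ + L * t * ‖v‖ ^ 2) =
      ⟪f' a, v⟫ + L / 2 * ‖v‖ ^ 2 := by
    have : ∀ t : ℝ, ⟪f' a, v⟫ + L * t * ‖v‖ ^ 2 = ⟪f' a, v⟫ + (L * ‖v‖ ^ 2) * t := by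
      intro t; ring
    simp_rw [this]
    rw [intervalIntegral.integral_add intervalIntegrable_const
      ((continuous_const.mul continuous_id').intervalIntegrable 0 1) (g := fun t : ℝ => L * ‖v‖ ^ 2 * t),
      intervalIntegral.integral_const_mul]
    simp [integral_id]; ring
  linarith [hab, hbound, hint.le, hint.ge]

theorem gradient_descent_smooth_convex_rate
    {d : ℕ} (f : EuclideanSpace ℝ (Fin d) → ℝ)
    (f' : EuclideanSpace ℝ (Fin d) → EuclideanSpace ℝ (Fin d))
    (hgrad : ∀ z, HasGradientAt f (f' z) z)
    (hconv : ∀ z w, f z ≥ f w + ⟪f' w, z - w⟫)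
    (L : ℝ) (hL : 0 < L)
    (hsmooth : ∀ z w, ‖f' z - f' w‖ ≤ L * ‖z - w‖)
    (xstar : EuclideanSpace ℝ (Fin d)) (hmin : ∀ y, f xstar ≤ f y)
    (x : ℕ → EuclideanSpace ℝ (Fin d))
    (hupd : ∀ k, x (k + 1) = x k - (1 / L) • f' (x k))
    (T : ℕ) (hT : 1 ≤ T) :
    f (x (T + 1)) - f xstar ≤ L * ‖x 1 - xstar‖ ^ 2 / (2 * T) := by
  set r : ℕ → ℝ := fun k => ‖x k - xstar‖ ^ 2 with hr
  -- sufficient decrease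
  have hA : ∀ k, f (x (k + 1)) ≤ f (x k) - 1 / (2 * L) * ‖f' (x k)‖ ^ 2 := by
    intro k
    have hd := descent_lemma f f' hgrad L hL hsmooth (x k) (x (k + 1))
    have hstep : x (k + 1) - x k = -((1 / L) • f' (x k)) := by
      rw [hupd k]; abel
    rw [hstep] at hd
    have h1 : ⟪f' (x k), -((1 / L) • f' (x k))⟫ = -(1 / L) * ‖f' (x k)‖ ^ 2 := by
      rw [inner_neg_right, real_inner_smul_right, real_inner_self_eq_norm_sq]; ring
    have h2 : ‖-((1 / L) • f' (x k))‖ ^ 2 = (1 / L) ^ 2 * ‖f' (x k)‖ ^ 2 := by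
      rw [norm_neg, norm_smul]
      simp [abs_of_nonneg (le_of_lt (by positivity : (0:ℝ) < 1 / L)), mul_pow]
    rw [h1, h2] at hd
    have hLne : L ≠ 0 := hL.ne'
    calc f (x (k + 1)) ≤ f (x k) + -(1 / L) * ‖f' (x k)‖ ^ 2 + L / 2 * ((1 / L) ^ 2 * ‖f' (x k)‖ ^ 2) := hd
      _ = f (x k) - 1 / (2 * L) * ‖f' (x k)‖ ^ 2 := by field_simp; ring
  -- key per-step inequality
  have hkey : ∀ k, f (x (k + 1)) - f xstar ≤ L / 2 * (r k - r (k + 1)) := by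
    intro k
    have hrrec : r (k + 1) = r k - 2 * (1 / L) * ⟪f' (x k), x k - xstar⟫
        + (1 / L) ^ 2 * ‖f' (x k)‖ ^ 2 := by
      have : x (k + 1) - xstar = (x k - xstar) - (1 / L) • f' (x k) := by
        rw [hupd k]; abel
      rw [hr]
      simp only [this]
      rw [norm_sub_sq_real, real_inner_smul_right, norm_smul]
      rw [real_inner_comm]
      simp [abs_of_nonneg (le_of_lt (by positivity : (0:ℝ) < 1 / L)), mul_pow]
      ring
    have hcv : f (x k) - f xstar ≤ ⟪f' (x k), x k - xstar⟫ := by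
      have h := hconv xstar (x k)
      have : ⟪f' (x k), xstar - x k⟫ = -⟪f' (x k), x k - xstar⟫ := by
        rw [← inner_neg_right]; congr 1; abel
      linarith [h, this.le, this.ge]
    have hAk := hA k
    have hLne : L ≠ 0 := hL.ne'
    have heq : L / 2 * (r k - r (k + 1)) =
        ⟪f' (x k), x k - xstar⟫ - 1 / (2 * L) * ‖f' (x k)‖ ^ 2 := by
      rw [hrrec]; field_simp; ring
    rw [heq]
    linarith
  -- monotone decrease
  have hmono : ∀ k, f (x (k + 1)) ≤ f (x k) := by
    intro k
    have := hA k
    nlinarith [sq_nonneg ‖f' (x k)‖, (by positivity : (0:ℝ) < 1 / (2 * L))]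
  have hanti : Antitone fun k => f (x k) := antitone_nat_of_succ_le hmono
  -- telescoping sum
  have htel : ∑ i ∈ Finset.range T, (r (i + 1) - r (i + 1 + 1)) = r 1 - r (T + 1) :=
    Finset.sum_range_sub' (fun i => r (i + 1)) T
  have hsum1 : ∑ i ∈ Finset.range T, (f (x (i + 2)) - f xstar) ≤ L / 2 * (r 1 - r (T + 1)) := by
    rw [← htel, Finset.mul_sum]
    apply Finset.sum_le_sum
    intro i _
    exact hkey (i + 1)
  have hlow : (T : ℝ) * (f (x (T + 1)) - f xstar) ≤
      ∑ i ∈ Finset.range T, (f (x (i + 2)) - f xstar) := by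
    have := Finset.card_nsmul_le_sum (Finset.range T)
      (fun i => f (x (i + 2)) - f xstar) (f (x (T + 1)) - f xstar)
      (fun i hi => by
        have : i + 2 ≤ T + 1 := by
          have := Finset.mem_range.mp hi; omega
        have := hanti this
        simpa using sub_le_sub_right this (f xstar))
    simpa [Finset.card_range, nsmul_eq_mul] using this
  have hrT : 0 ≤ r (T + 1) := by positivity
  have hTpos : (0 : ℝ) < T := by exact_mod_cast hT
  rw [le_div_iff₀ (by positivity)]
  have hr1 : r 1 = ‖x 1 - xstar‖ ^ 2 := rfl
  nlinarith [hsum1, hlow, hrT]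
end

section
/- (Convergence of the Euclidean Bregman-Lagrangian dynamics.) Let f : ℝ^d → ℝ be a differentiable convex function with a minimizer x*. Let α, β : ℝ → ℝ be differentiable functions satisfying the ideal scaling condition β'(t) ≤ e^{α(t)} for all t ≥ t₀. Let x : ℝ → ℝ^d be a twice continuously differentiable curve satisfying, for all t ≥ t₀, the second-order differential equation ẍ(t) + (e^{α(t)} − α'(t))·ẋ(t) + e^{2α(t)+β(t)}·∇f(x(t)) = 0. Define the Lyapunov function E(t) = (1/2)‖x* − x(t) − e^{−α(t)}ẋ(t)‖² + e^{β(t)}(f(x(t)) − f(x*)). Then E is nonincreasing on [t₀, ∞), and consequently f(x(t)) − f(x*) ≤ e^{−β(t)}·E(t₀) for all t ≥ t₀. -/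
open RealInnerProductSpace

theorem bregman_lagrangian_dynamics_convergence
    {d : ℕ} (f : EuclideanSpace ℝ (Fin d) → ℝ)
    (f' : EuclideanSpace ℝ (Fin d) → EuclideanSpace ℝ (Fin d))
    (hgrad : ∀ z, HasGradientAt f (f' z) z)
    (hconv : ∀ z w, f z ≥ f w + ⟪f' w, z - w⟫)
    (xstar : EuclideanSpace ℝ (Fin d)) (hmin : ∀ y, f xstar ≤ f y)
    (t₀ : ℝ) (α β : ℝ → ℝ)
    (hα : Differentiable ℝ α) (hβ : Differentiable ℝ β)
    (hideal : ∀ t ≥ t₀, deriv β t ≤ Real.exp (α t))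
    (x : ℝ → EuclideanSpace ℝ (Fin d)) (hx : ContDiff ℝ 2 x)
    (hode : ∀ t ≥ t₀,
      deriv (deriv x) t + (Real.exp (α t) - deriv α t) • deriv x t
        + Real.exp (2 * α t + β t) • f' (x t) = 0)
    (En : ℝ → ℝ)
    (hEn : ∀ t, En t =
      (1 / 2) * ‖xstar - x t - Real.exp (-α t) • deriv x t‖ ^ 2
        + Real.exp (β t) * (f (x t) - f xstar)) :
    AntitoneOn En (Set.Ici t₀) ∧
      ∀ t ≥ t₀, f (x t) - f xstar ≤ Real.exp (-β t) * En t₀ := by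
  have hx1 : Differentiable ℝ x := hx.differentiable (by norm_num)
  have hx2 : Differentiable ℝ (deriv x) := by
    have h : ContDiff ℝ ((1 : WithTop ℕ∞) + 1) x := by exact_mod_cast hx
    exact (contDiff_succ_iff_deriv.mp h).2.2.differentiable one_ne_zero
  -- the curve v and its derivative
  set v : ℝ → EuclideanSpace ℝ (Fin d) :=
    fun t => xstar - x t - Real.exp (-α t) • deriv x t with hv_def
  set vd : ℝ → EuclideanSpace ℝ (Fin d) :=
    fun t => -(deriv x t) - (Real.exp (-α t) • deriv (deriv x) t
      + (Real.exp (-α t) * -(deriv α t)) • deriv x t) with hvd_def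
  have hv : ∀ t, HasDerivAt v (vd t) t := by
    intro t
    have h1 : HasDerivAt x (deriv x t) t := (hx1 t).hasDerivAt
    have h2 : HasDerivAt (deriv x) (deriv (deriv x) t) t := (hx2 t).hasDerivAt
    have hc : HasDerivAt (fun s => Real.exp (-α s)) (Real.exp (-α t) * -(deriv α t)) t :=
      ((hα t).hasDerivAt.neg).exp
    have hsm := hc.smul h2
    have := ((hasDerivAt_const t xstar).sub h1).sub hsm
    rw [zero_sub] at this
    exact this
  -- derivative of f ∘ x
  have hfx : ∀ t, HasDerivAt (fun s => f (x s)) ⟪f' (x t), deriv x t⟫ t := by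
    intro t
    have h1 : HasDerivAt x (deriv x t) t := (hx1 t).hasDerivAt
    have := ((hgrad (x t)).hasFDerivAt).comp_hasDerivAt t h1
    simp [InnerProductSpace.toDual_apply_apply] at this
    exact this
  -- derivative of En
  set D : ℝ → ℝ := fun t => ⟪vd t, v t⟫
      + Real.exp (β t) * deriv β t * (f (x t) - f xstar)
      + Real.exp (β t) * ⟪f' (x t), deriv x t⟫ with hD_def
  have hEnfun : En = fun t => (1 / 2) * ⟪v t, v t⟫ + Real.exp (β t) * (f (x t) - f xstar) := by
    funext t
    rw [hEn t, real_inner_self_eq_norm_sq]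
  have hEd : ∀ t, HasDerivAt En (D t) t := by
    intro t
    rw [hEnfun]
    have hi : HasDerivAt (fun s => ⟪v s, v s⟫) (⟪v t, vd t⟫ + ⟪vd t, v t⟫) t :=
      (hv t).inner ℝ (hv t)
    have hb : HasDerivAt (fun s => Real.exp (β s)) (Real.exp (β t) * deriv β t) t :=
      ((hβ t).hasDerivAt).exp
    have hprod := hb.mul ((hfx t).sub_const (f xstar))
    have := (hi.const_mul (1 / 2)).add hprod
    refine this.congr_deriv ?_
    rw [hD_def]
    simp only [real_inner_comm (v t) (vd t)]
    ring
  -- the key estimate on the derivative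
  have key : ∀ t ≥ t₀, D t ≤ 0 := by
    intro t ht
    have h := hode t ht
    have hxx : deriv (deriv x) t
        = -((Real.exp (α t) - deriv α t) • deriv x t
            + Real.exp (2 * α t + β t) • f' (x t)) := by
      have h' : deriv (deriv x) t + ((Real.exp (α t) - deriv α t) • deriv x t
          + Real.exp (2 * α t + β t) • f' (x t)) = 0 := by
        rw [← add_assoc]; exact h
      exact eq_neg_of_add_eq_zero_left h'
    have hvd_eq : vd t = Real.exp (α t + β t) • f' (x t) := by
      rw [hvd_def]
      simp only [hxx]
      have ha : Real.exp (-α t) = (Real.exp (α t))⁻¹ := Real.exp_neg _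
      have h2 : Real.exp (2 * α t + β t)
          = Real.exp (α t) * (Real.exp (α t) * Real.exp (β t)) := by
        rw [two_mul, Real.exp_add, Real.exp_add]; ring
      have h3 : Real.exp (α t + β t) = Real.exp (α t) * Real.exp (β t) := Real.exp_add _ _
      rw [ha, h2, h3]
      have hane : Real.exp (α t) ≠ 0 := (Real.exp_pos _).ne'
      match_scalars <;> field_simp <;> ring
    have hinner : ⟪vd t, v t⟫ = Real.exp (α t + β t) * ⟪f' (x t), xstar - x t⟫
        - Real.exp (β t) * ⟪f' (x t), deriv x t⟫ := by
      rw [hvd_eq]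
      show (⟪Real.exp (α t + β t) • f' (x t), (xstar - x t) - Real.exp (-α t) • deriv x t⟫ : ℝ) = _
      rw [real_inner_smul_left, inner_sub_right, real_inner_smul_right]
      have hfact : Real.exp (α t + β t) * Real.exp (-α t) = Real.exp (β t) := by
        rw [← Real.exp_add]; ring_nf
      linear_combination (-(⟪f' (x t), deriv x t⟫ : ℝ)) * hfact
    have hI : ⟪f' (x t), xstar - x t⟫ ≤ f xstar - f (x t) := by
      have := hconv xstar (x t)
      linarith
    have hg : 0 ≤ f (x t) - f xstar := by linarith [hmin (x t)]
    have hid := hideal t ht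
    have heab : Real.exp (α t + β t) = Real.exp (α t) * Real.exp (β t) := Real.exp_add _ _
    have hpa := Real.exp_pos (α t)
    have hpb := Real.exp_pos (β t)
    rw [hD_def]
    simp only [hinner]
    have h1 : Real.exp (α t + β t) * ⟪f' (x t), xstar - x t⟫
        ≤ Real.exp (α t) * Real.exp (β t) * (f xstar - f (x t)) := by
      rw [heab]
      exact mul_le_mul_of_nonneg_left hI (by positivity)
    have h2 : Real.exp (β t) * deriv β t * (f (x t) - f xstar)
        ≤ Real.exp (β t) * Real.exp (α t) * (f (x t) - f xstar) := by
      have := mul_le_mul_of_nonneg_right hid hg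
      nlinarith
    nlinarith
  -- antitone
  have hanti : AntitoneOn En (Set.Ici t₀) := by
    apply antitoneOn_of_deriv_nonpos (convex_Ici t₀)
    · exact fun t _ => ((hEd t).continuousAt).continuousWithinAt
    · exact fun t _ => ((hEd t).differentiableAt).differentiableWithinAt
    · intro t ht
      rw [interior_Ici] at ht
      rw [(hEd t).deriv]
      exact key t (le_of_lt ht)
  refine ⟨hanti, fun t ht => ?_⟩
  have hle : En t ≤ En t₀ := hanti (Set.self_mem_Ici) ht ht
  have hlow : Real.exp (β t) * (f (x t) - f xstar) ≤ En t := by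
    rw [hEn t]
    nlinarith [sq_nonneg ‖xstar - x t - Real.exp (-α t) • deriv x t‖]
  have hpb := Real.exp_pos (β t)
  rw [Real.exp_neg, ← div_eq_inv_mul, le_div_iff₀ hpb]
  nlinarith
end

section
/- (One-step inequality for the extragradient method.) Let E be a real Hilbert space, F : E → E a μ-strongly monotone and L-Lipschitz operator with F(x*) = 0, and η > 0. Given x ∈ E, define the extragradient step by x̃ = x − ηF(x) and x⁺ = x − ηF(x̃). Then ‖x⁺ − x*‖² ≤ (1 − ημ)‖x − x*‖² + (η²L² − 1 + 2ημ)‖x − x̃‖². -/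
/-!
Write `x̃ = x - η F(x)` and `x⁺ = x - η F(x̃)`. Expanding squares gives the exact identity
`‖x⁺ - x*‖² = ‖x - x*‖² - 2η⟪F x̃, x̃ - x*⟫ + ‖x̃ - x⁺‖² - ‖x - x̃‖²`, which holds with `x̃`
and `F x̃` replaced by arbitrary vectors. Strong monotonicity at the zero `x*` bounds the inner
product below by `μ‖x̃ - x*‖²`, the Lipschitz bound gives
`‖x̃ - x⁺‖ = η‖F x̃ - F x‖ ≤ ηL‖x - x̃‖`, and the leftover `-2ημ‖x̃ - x*‖²` is traded for
`-ημ‖x - x*‖² + 2ημ‖x - x̃‖²` via `‖x - x*‖² ≤ 2‖x - x̃‖² + 2‖x̃ - x*‖²`.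
-/

open RealInnerProductSpace

theorem norm_sub_sq_le_two_mul {G : Type*} [SeminormedAddCommGroup G] (a b c : G) :
    ‖a - c‖ ^ 2 ≤ 2 * (‖a - b‖ ^ 2 + ‖b - c‖ ^ 2) :=
  (pow_le_pow_left₀ (norm_nonneg _) (norm_sub_le_norm_sub_add_norm_sub a b c) 2).trans add_sq_le

section InnerProduct

variable {E : Type*} [NormedAddCommGroup E] [InnerProductSpace ℝ E]

theorem norm_sub_smul_sub_sq_eq (x x' y w : E) (η : ℝ) :
    ‖x - η • w - y‖ ^ 2 =
      ‖x - y‖ ^ 2 - 2 * η * ⟪w, x' - y⟫ + ‖x' - (x - η • w)‖ ^ 2 - ‖x - x'‖ ^ 2 := by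
  have hp : x - η • w - y = (x - y) - η • w := sub_right_comm _ _ _
  have hq : x' - (x - η • w) = η • w - (x - x') := by abel
  have hr : x' - y = (x - y) - (x - x') := (sub_sub_sub_cancel_left _ _ _).symm
  rw [hp, hq, hr, norm_sub_sq_real (x - y), norm_sub_sq_real (η • w), inner_sub_right,
    real_inner_smul_right, real_inner_smul_left, real_inner_comm w]
  ring

theorem mul_norm_sub_sq_le_inner_of_apply_eq_zero {F : E → E} {μ : ℝ}
    (hsm : ∀ x y, ⟪F x - F y, x - y⟫ ≥ μ * ‖x - y‖ ^ 2) {z : E} (hz : F z = 0) (x : E) :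
    μ * ‖x - z‖ ^ 2 ≤ ⟪F x, x - z⟫ := by
  simpa only [hz, sub_zero] using hsm x z

end InnerProduct

theorem norm_apply_sub_apply_sq_le {G H : Type*} [SeminormedAddCommGroup G]
    [SeminormedAddCommGroup H] {F : G → H} {L : ℝ}
    (hlip : ∀ x y, ‖F x - F y‖ ≤ L * ‖x - y‖) (x y : G) :
    ‖F x - F y‖ ^ 2 ≤ L ^ 2 * ‖x - y‖ ^ 2 := by
  rw [← mul_pow]
  exact pow_le_pow_left₀ (norm_nonneg _) (hlip x y) 2

theorem extragradient_one_step_inequality_general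
    {E : Type*} [NormedAddCommGroup E] [InnerProductSpace ℝ E]
    (F : E → E) (μ L : ℝ) (hμ : 0 < μ)
    (hsm : ∀ x y, ⟪F x - F y, x - y⟫ ≥ μ * ‖x - y‖ ^ 2)
    (hlip : ∀ x y, ‖F x - F y‖ ≤ L * ‖x - y‖)
    (xstar : E) (hfix : F xstar = 0)
    (η : ℝ) (hη : 0 < η) (x : E) :
    ‖(x - η • F (x - η • F x)) - xstar‖ ^ 2 ≤
      (1 - η * μ) * ‖x - xstar‖ ^ 2
        + (η ^ 2 * L ^ 2 - 1 + 2 * η * μ) * ‖x - (x - η • F x)‖ ^ 2 := by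
  set xt := x - η • F x
  have hmono := mul_le_mul_of_nonneg_left
    (mul_norm_sub_sq_le_inner_of_apply_eq_zero hsm hfix xt) (by positivity : 0 ≤ 2 * η)
  have hsplit := mul_le_mul_of_nonneg_left
    (norm_sub_sq_le_two_mul x xt xstar) (by positivity : 0 ≤ η * μ)
  have hextra : ‖xt - (x - η • F xt)‖ ^ 2 ≤ η ^ 2 * (L ^ 2 * ‖x - xt‖ ^ 2) := by
    have hdiff : xt - (x - η • F xt) = η • (F xt - F x) := by
      rw [sub_sub_sub_cancel_left, smul_sub]
    rw [hdiff, norm_smul, mul_pow, Real.norm_eq_abs, sq_abs, norm_sub_rev x]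
    exact mul_le_mul_of_nonneg_left (norm_apply_sub_apply_sq_le hlip xt x) (sq_nonneg η)
  rw [norm_sub_smul_sub_sq_eq x xt xstar (F xt) η]
  linarith

theorem extragradient_one_step_inequality
    {E : Type*} [NormedAddCommGroup E] [InnerProductSpace ℝ E] [CompleteSpace E]
    (F : E → E) (μ L : ℝ) (hμ : 0 < μ)
    (hsm : ∀ x y, ⟪F x - F y, x - y⟫ ≥ μ * ‖x - y‖ ^ 2)
    (hlip : ∀ x y, ‖F x - F y‖ ≤ L * ‖x - y‖)
    (xstar : E) (hfix : F xstar = 0)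
    (η : ℝ) (hη : 0 < η) (x : E) :
    ‖(x - η • F (x - η • F x)) - xstar‖ ^ 2 ≤
      (1 - η * μ) * ‖x - xstar‖ ^ 2
        + (η ^ 2 * L ^ 2 - 1 + 2 * η * μ) * ‖x - (x - η • F x)‖ ^ 2 :=
  extragradient_one_step_inequality_general F μ L hμ hsm hlip xstar hfix η hη x
end

section
/- (Linear convergence of the extragradient method.) Let E be a real Hilbert space and F : E → E a μ-strongly monotone and L-Lipschitz operator with 0 < μ ≤ L and F(x*) = 0. Consider the extragradient iteration with step size η = 1/(2(L+μ)): x̃_k = x_k − ηF(x_k), x_{k+1} = x_k − ηF(x̃_k). Then ‖x_{k+1} − x*‖² ≤ (1 − μ/(4L))‖x_k − x*‖² for every k, and hence ‖x_{T+1} − x*‖² ≤ (1 − μ/(4L))^T‖x_1 − x*‖² for every T ≥ 1. -/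
open RealInnerProductSpace

lemma extragrad_key (μ L r t : ℝ) (hμ : 0 < μ) (hμL : μ ≤ L) :
    μ / (4 * L) * r ^ 2 ≤ μ / (L + μ) * (r - t) ^ 2 + 3 / 4 * t ^ 2 := by
  have hL : 0 < L := hμ.trans_le hμL
  have hLμ : 0 < L + μ := by linarith
  have hpoly : μ * (L + μ) * r ^ 2 ≤ 4 * L * μ * (r - t) ^ 2 + 3 * L * (L + μ) * t ^ 2 := by
    nlinarith [sq_nonneg (L * (3*L + 7*μ) * t - 4 * L * μ * r),
      mul_nonneg (mul_nonneg (mul_nonneg (mul_pos hL hμ).le hLμ.le)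
        (by linarith : (0:ℝ) ≤ 9*L - 7*μ)) (sq_nonneg r),
      mul_pos hL (by linarith : (0:ℝ) < 3*L + 7*μ)]
  have h1 : μ / (4 * L) * r ^ 2 = μ * r ^ 2 / (4 * L) := by ring
  have h2 : μ / (L + μ) * (r - t) ^ 2 + 3 / 4 * t ^ 2
      = (4 * L * μ * (r - t) ^ 2 + 3 * L * (L + μ) * t ^ 2) / (4 * L * (L + μ)) := by
    field_simp
  rw [h1, h2, div_le_div_iff₀ (by linarith) (by positivity)]
  nlinarith [mul_le_mul_of_nonneg_left hpoly (by linarith : (0:ℝ) ≤ 4 * L)]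

lemma extragrad_step
    {E : Type*} [NormedAddCommGroup E] [InnerProductSpace ℝ E]
    (F : E → E) (μ L : ℝ) (hμ : 0 < μ) (hμL : μ ≤ L)
    (hsm : ∀ x y, ⟪F x - F y, x - y⟫ ≥ μ * ‖x - y‖ ^ 2)
    (hlip : ∀ x y, ‖F x - F y‖ ≤ L * ‖x - y‖)
    (xstar : E) (hfix : F xstar = 0)
    (x xt : ℕ → E)
    (hxt : ∀ k, xt k = x k - (1 / (2 * (L + μ))) • F (x k))
    (hupd : ∀ k, x (k + 1) = x k - (1 / (2 * (L + μ))) • F (xt k)) :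
    ∀ k, ‖x (k + 1) - xstar‖ ^ 2 ≤ (1 - μ / (4 * L)) * ‖x k - xstar‖ ^ 2 := by
  have hL : 0 < L := hμ.trans_le hμL
  have hLμ : 0 < L + μ := by linarith
  obtain ⟨η, hηdef⟩ : ∃ η : ℝ, η = 1 / (2 * (L + μ)) := ⟨_, rfl⟩
  simp only [← hηdef] at hxt hupd
  have hηpos : 0 < η := by rw [hηdef]; positivity
  have hηL : η * L ≤ 1 / 2 := by
    rw [hηdef, div_mul_eq_mul_div, div_le_div_iff₀ (by linarith) two_pos]
    nlinarith
  have h2ημ : 2 * η * μ = μ / (L + μ) := by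
    rw [hηdef]; field_simp
  intro k
  obtain ⟨a, ha⟩ : ∃ a : E, a = x k - xstar := ⟨_, rfl⟩
  obtain ⟨g, hg⟩ : ∃ g : E, g = F (xt k) := ⟨_, rfl⟩
  obtain ⟨f, hf⟩ : ∃ f : E, f = F (x k) := ⟨_, rfl⟩
  obtain ⟨b, hb⟩ : ∃ b : E, b = xt k - xstar := ⟨_, rfl⟩
  have h1 : x (k + 1) - xstar = a - η • g := by rw [hupd k, ha, hg]; abel
  have h2 : b = a - η • f := by rw [hb, hxt k, ha, hf]; abel
  have h3 : xt k - x k = -(η • f) := by rw [hxt k, hf]; abel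
  have eg : ⟪g, b⟫ ≥ μ * ‖b‖ ^ 2 := by
    have := hsm (xt k) xstar
    rw [hfix, sub_zero, ← hg, ← hb] at this
    exact this
  have elip : ‖g - f‖ ≤ L * (η * ‖f‖) := by
    have := hlip (xt k) (x k)
    rw [← hg, ← hf, h3, norm_neg, norm_smul, Real.norm_eq_abs, abs_of_pos hηpos] at this
    exact this
  have etri : (‖a‖ - η * ‖f‖) ^ 2 ≤ ‖b‖ ^ 2 := by
    have h4 : |‖a‖ - ‖η • f‖| ≤ ‖a - η • f‖ := abs_norm_sub_norm_le _ _
    rw [← h2] at h4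
    have h5 : ‖η • f‖ = η * ‖f‖ := by
      rw [norm_smul, Real.norm_eq_abs, abs_of_pos hηpos]
    calc (‖a‖ - η * ‖f‖) ^ 2 = |‖a‖ - ‖η • f‖| ^ 2 := by rw [h5, sq_abs]
      _ ≤ ‖b‖ ^ 2 := by
          apply pow_le_pow_left₀ (abs_nonneg _) h4
  have expand1 : ‖a - η • g‖ ^ 2 = ‖a‖ ^ 2 - 2 * η * ⟪g, a⟫ + η ^ 2 * ‖g‖ ^ 2 := by
    rw [@norm_sub_sq_real, real_inner_smul_right, real_inner_comm, norm_smul,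
      Real.norm_eq_abs, abs_of_pos hηpos]
    ring
  have expand2 : ‖g - f‖ ^ 2 = ‖g‖ ^ 2 - 2 * ⟪g, f⟫ + ‖f‖ ^ 2 := by
    rw [@norm_sub_sq_real]
  have hab : a = b + η • f := by rw [h2]; abel
  have inner_split : ⟪g, a⟫ = ⟪g, b⟫ + η * ⟪g, f⟫ := by
    rw [hab, inner_add_right, real_inner_smul_right]
  have hd2 : ‖g - f‖ ^ 2 ≤ (L * (η * ‖f‖)) ^ 2 :=
    pow_le_pow_left₀ (norm_nonneg _) elip 2
  have e6 : (L * (η * ‖f‖)) ^ 2 ≤ 1 / 4 * ‖f‖ ^ 2 := by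
    have h7 : L * (η * ‖f‖) ≤ 1 / 2 * ‖f‖ := by
      nlinarith [norm_nonneg f, hηL]
    nlinarith [mul_nonneg (mul_nonneg hL.le hηpos.le) (norm_nonneg f)]
  have hkey := extragrad_key μ L ‖a‖ (η * ‖f‖) hμ hμL
  have e5 : 2 * η * (μ * ‖b‖ ^ 2) ≤ 2 * η * ⟪g, b⟫ :=
    mul_le_mul_of_nonneg_left (by linarith [eg]) (by linarith)
  have e7 : 2 * η * μ * (‖a‖ - η * ‖f‖) ^ 2 ≤ 2 * η * μ * ‖b‖ ^ 2 :=
    mul_le_mul_of_nonneg_left etri (mul_nonneg (by linarith) hμ.le)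
  have e8 : η ^ 2 * ‖g - f‖ ^ 2 ≤ η ^ 2 * (1 / 4 * ‖f‖ ^ 2) :=
    mul_le_mul_of_nonneg_left (hd2.trans e6) (sq_nonneg η)
  have e9 : 2 * η * μ * (‖a‖ - η * ‖f‖) ^ 2 = μ / (L + μ) * (‖a‖ - η * ‖f‖) ^ 2 := by
    rw [← h2ημ]
  rw [h1, ← ha, expand1, inner_split]
  calc ‖a‖ ^ 2 - 2 * η * (⟪g, b⟫ + η * ⟪g, f⟫) + η ^ 2 * ‖g‖ ^ 2
      = ‖a‖ ^ 2 - 2 * η * ⟪g, b⟫ - η ^ 2 * ‖f‖ ^ 2 + η ^ 2 * ‖g - f‖ ^ 2 := by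
        linear_combination -η ^ 2 * expand2
    _ ≤ ‖a‖ ^ 2 - 2 * η * (μ * ‖b‖ ^ 2) - η ^ 2 * ‖f‖ ^ 2 + η ^ 2 * (1 / 4 * ‖f‖ ^ 2) := by
        linarith [e5, e8]
    _ ≤ ‖a‖ ^ 2 - (2 * η * μ * (‖a‖ - η * ‖f‖) ^ 2 + 3 / 4 * (η * ‖f‖) ^ 2) := by
        linarith [e7]
    _ ≤ (1 - μ / (4 * L)) * ‖a‖ ^ 2 := by linarith [hkey, e9]


theorem extragradient_linear_convergence
    {E : Type*} [NormedAddCommGroup E] [InnerProductSpace ℝ E] [CompleteSpace E]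
    (F : E → E) (μ L : ℝ) (hμ : 0 < μ) (hμL : μ ≤ L)
    (hsm : ∀ x y, ⟪F x - F y, x - y⟫ ≥ μ * ‖x - y‖ ^ 2)
    (hlip : ∀ x y, ‖F x - F y‖ ≤ L * ‖x - y‖)
    (xstar : E) (hfix : F xstar = 0)
    (x xt : ℕ → E)
    (hxt : ∀ k, xt k = x k - (1 / (2 * (L + μ))) • F (x k))
    (hupd : ∀ k, x (k + 1) = x k - (1 / (2 * (L + μ))) • F (xt k)) :
    (∀ k, ‖x (k + 1) - xstar‖ ^ 2 ≤ (1 - μ / (4 * L)) * ‖x k - xstar‖ ^ 2) ∧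
      ∀ T : ℕ, 1 ≤ T →
        ‖x (T + 1) - xstar‖ ^ 2 ≤ (1 - μ / (4 * L)) ^ T * ‖x 1 - xstar‖ ^ 2 := by
  have hL : 0 < L := hμ.trans_le hμL
  have hLμ : 0 < L + μ := by linarith
  have hstep := extragrad_step F μ L hμ hμL hsm hlip xstar hfix x xt hxt hupd
  refine ⟨hstep, ?_⟩
  have hc : 0 ≤ 1 - μ / (4 * L) := by
    have : μ / (4 * L) ≤ 1 := by
      rw [div_le_one (by linarith)]; linarith
    linarith
  intro T hT
  induction T with
  | zero => omega
  | succ n ih =>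
    by_cases hn : n = 0
    · subst hn
      simpa [pow_one] using hstep 1
    · have hn1 : 1 ≤ n := Nat.one_le_iff_ne_zero.mpr hn
      have ih' := ih hn1
      calc ‖x (n + 1 + 1) - xstar‖ ^ 2
          ≤ (1 - μ / (4 * L)) * ‖x (n + 1) - xstar‖ ^ 2 := hstep (n + 1)
        _ ≤ (1 - μ / (4 * L)) * ((1 - μ / (4 * L)) ^ n * ‖x 1 - xstar‖ ^ 2) :=
            mul_le_mul_of_nonneg_left ih' hc
        _ = (1 - μ / (4 * L)) ^ (n + 1) * ‖x 1 - xstar‖ ^ 2 := by ring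
end
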